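/- For any real d×n matrix A, a d×k matrix X with orthonormal columns, and an n×k matrix Y with orthonormal columns (k ≤ min{d,n}), we have |Tr(Xᵀ A Y)| ≤ √k · (∑_{i=1}^k σ_i²(A))^{1/2}. -/

import Mathlib

open Matrix BigOperators

/-- The singular values of a real d×n matrix A, indexed (in no particular
order) by `Fin n`: the square roots of the eigenvalues of AᴴA. -/
noncomputable def singularValues {d n : ℕ} (A : Matrix (Fin d) (Fin n) ℝ) :
    Fin n → ℝ :=
  fun i => Real.sqrt ((Matrix.isHermitian_conjTranspose_mul_self A).eigenvalues i)

/-- σ is the decreasing enumeration of the singular values of A. -/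
def IsSortedSingularValues {d n : ℕ} (A : Matrix (Fin d) (Fin n) ℝ)
    (σ : Fin n → ℝ) : Prop :=
  Antitone σ ∧ ∃ e : Equiv.Perm (Fin n), σ = singularValues A ∘ e

/- ---------- auxiliary lemmas ---------- -/

lemma aux_row_sq_le_one {n k : ℕ} (M : Matrix (Fin n) (Fin k) ℝ) (h : Mᵀ * M = 1) (i : Fin n) :
    ∑ j, M i j ^ 2 ≤ 1 := by
  set P := M * Mᵀ with hPdef
  have hP : P * P = P := by
    rw [hPdef, Matrix.mul_assoc, ← Matrix.mul_assoc Mᵀ, h, Matrix.one_mul]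
  have hPi : P i i = ∑ j, M i j ^ 2 := by
    simp [hPdef, mul_apply, transpose_apply, pow_two]
  have hsym : ∀ a b, P b a = P a b := by
    intro a b
    simp [hPdef, mul_apply, transpose_apply, mul_comm]
  have h2 : P i i = ∑ j, P i j ^ 2 := by
    conv_lhs => rw [← hP]
    rw [mul_apply]
    exact Finset.sum_congr rfl fun j _ => by rw [pow_two, hsym j i]
  have h3 : P i i ^ 2 ≤ P i i := by
    calc (P i i)^2 ≤ ∑ j, P i j ^ 2 :=
      Finset.single_le_sum (f := fun j => P i j ^ 2) (fun j _ => sq_nonneg _) (Finset.mem_univ i)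
    _ = P i i := h2.symm
  have h0 : 0 ≤ P i i := by
    rw [hPi]; positivity
  nlinarith [hPi ▸ h3, hPi ▸ h0]

lemma aux_sum_rows_sq {n k : ℕ} (M : Matrix (Fin n) (Fin k) ℝ) (h : Mᵀ * M = 1) :
    ∑ i, ∑ j, M i j ^ 2 = k := by
  have := congrArg Matrix.trace h
  rw [Matrix.trace_one] at this
  rw [Finset.sum_comm]
  calc ∑ j : Fin k, ∑ i : Fin n, M i j ^ 2 = Matrix.trace (Mᵀ * M) := by
        simp [Matrix.trace, mul_apply, pow_two]
    _ = k := by rw [h, Matrix.trace_one]; simp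

lemma aux_card_filter {n k : ℕ} (hkn : k ≤ n) :
    (Finset.univ.filter (fun i : Fin n => (i : ℕ) < k)).card = k := by
  have he : Finset.univ.filter (fun i : Fin n => (i : ℕ) < k)
      = Finset.map (Fin.castLEEmb hkn) Finset.univ := by
    ext i
    simp only [Finset.mem_filter, Finset.mem_univ, true_and, Finset.mem_map]
    constructor
    · intro hi
      exact ⟨⟨(i : ℕ), hi⟩, by simp [Fin.ext_iff]⟩
    · rintro ⟨a, -, rfl⟩
      simpa using a.isLt
  rw [he, Finset.card_map, Finset.card_univ, Fintype.card_fin]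

lemma aux_thresh {n k : ℕ} (hkn : k ≤ n) (hk0 : 0 < k) (ν c : Fin n → ℝ)
    (hν : Antitone ν) (hc0 : ∀ i, 0 ≤ c i) (hc1 : ∀ i, c i ≤ 1)
    (hsum : ∑ i, c i = k) :
    ∑ i, ν i * c i ≤ ∑ i ∈ Finset.univ.filter (fun i : Fin n => (i : ℕ) < k), ν i := by
  set t := ν ⟨k - 1, lt_of_lt_of_le (Nat.sub_lt hk0 one_pos) hkn⟩ with ht
  have key : ∀ i : Fin n,
      ν i * c i ≤ ν i * (if (i : ℕ) < k then 1 else 0) + t * (c i - if (i : ℕ) < k then 1 else 0) := by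
    intro i
    by_cases h : (i : ℕ) < k
    · simp only [if_pos h]
      have h1 : t ≤ ν i := hν (by simp [Fin.le_def]; omega)
      nlinarith [hc1 i]
    · simp only [if_neg h]
      have h1 : ν i ≤ t := hν (by simp [Fin.le_def]; omega)
      nlinarith [hc0 i]
  calc ∑ i, ν i * c i
      ≤ ∑ i, (ν i * (if (i : ℕ) < k then 1 else 0) + t * (c i - if (i : ℕ) < k then 1 else 0)) :=
        Finset.sum_le_sum fun i _ => key i
    _ = ∑ i ∈ Finset.univ.filter (fun i : Fin n => (i : ℕ) < k), ν i := by
        rw [Finset.sum_add_distrib]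
        have h1 : ∑ i : Fin n, ν i * (if (i : ℕ) < k then 1 else 0)
            = ∑ i ∈ Finset.univ.filter (fun i : Fin n => (i : ℕ) < k), ν i := by
          rw [Finset.sum_filter]
          exact Finset.sum_congr rfl fun i _ => by split <;> simp
        have h2 : ∑ i : Fin n, t * (c i - if (i : ℕ) < k then 1 else 0) = 0 := by
          rw [← Finset.mul_sum, Finset.sum_sub_distrib, hsum]
          simp [Finset.sum_ite, aux_card_filter hkn]
        rw [h1, h2, add_zero]

lemma aux_trace_diag {n k : ℕ} (μ : Fin n → ℝ) (M : Matrix (Fin n) (Fin k) ℝ) :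
    Matrix.trace (Mᵀ * Matrix.diagonal μ * M) = ∑ i, μ i * ∑ j, M i j ^ 2 := by
  rw [Matrix.trace]
  simp only [Matrix.diag_apply, Matrix.mul_apply, Matrix.transpose_apply,
    Matrix.diagonal_apply, mul_ite, mul_zero, ite_mul, zero_mul,
    Finset.sum_ite_eq, Finset.mem_univ, if_pos, Finset.sum_mul]
  rw [Finset.sum_comm]
  refine Finset.sum_congr rfl fun i _ => ?_
  rw [Finset.mul_sum]
  refine Finset.sum_congr rfl fun j _ => ?_
  rw [Finset.sum_ite_eq' Finset.univ i (fun x => M x j * μ x * M i j)]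
  simp; ring

lemma aux_cs {d k : ℕ} (X : Matrix (Fin d) (Fin k) ℝ) (hX : Xᵀ * X = 1)
    (C : Matrix (Fin d) (Fin k) ℝ) :
    |Matrix.trace (Xᵀ * C)| ≤ Real.sqrt k * Real.sqrt (Matrix.trace (Cᵀ * C)) := by
  have htr : ∀ (D E : Matrix (Fin d) (Fin k) ℝ),
      Matrix.trace (Dᵀ * E) = ∑ p : Fin d × Fin k, D p.1 p.2 * E p.1 p.2 := by
    intro D E
    rw [Matrix.trace, Fintype.sum_prod_type, Finset.sum_comm]
    simp [Matrix.mul_apply]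
  have h1 : ∑ p : Fin d × Fin k, X p.1 p.2 ^ 2 = (k : ℝ) := by
    have h := htr X X
    rw [hX, Matrix.trace_one] at h
    simp only [Fintype.card_fin] at h
    rw [h]
    exact Finset.sum_congr rfl fun p _ => by ring
  have h2 : ∑ p : Fin d × Fin k, C p.1 p.2 ^ 2 = Matrix.trace (Cᵀ * C) := by
    rw [htr C C]
    exact Finset.sum_congr rfl fun p _ => by ring
  rw [htr X C]
  rw [← h1, ← h2]
  refine abs_le.mpr ⟨?_, Real.sum_mul_le_sqrt_mul_sqrt _ _ _⟩
  have := Real.sum_mul_le_sqrt_mul_sqrt Finset.univ (fun p : Fin d × Fin k => -X p.1 p.2)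
    (fun p => C p.1 p.2)
  simp only [neg_mul, Finset.sum_neg_distrib, neg_sq] at this
  linarith

/-- If X (d×k) and Y (n×k) have orthonormal columns and k ≤ min{d,n}, then
|Tr(XᵀAY)| ≤ √k·(∑_{i=1}^k σ_i²(A))^{1/2}. -/
theorem stmt10 (d n k : ℕ) (hk : k ≤ min d n)
    (A : Matrix (Fin d) (Fin n) ℝ)
    (X : Matrix (Fin d) (Fin k) ℝ) (hX : Xᵀ * X = 1)
    (Y : Matrix (Fin n) (Fin k) ℝ) (hY : Yᵀ * Y = 1)
    (σ : Fin n → ℝ) (hσ : IsSortedSingularValues A σ) :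
    |Matrix.trace (Xᵀ * A * Y)| ≤
      Real.sqrt k *
        Real.sqrt (∑ i ∈ Finset.univ.filter (fun i : Fin n => (i : ℕ) < k), σ i ^ 2) := by
  obtain ⟨hant, e, hσe⟩ := hσ
  have hσ0 : ∀ i, 0 ≤ σ i := fun i => by
    rw [hσe]; exact Real.sqrt_nonneg _
  rcases Nat.eq_zero_or_pos k with hk0 | hk0
  · subst hk0
    have h0 : Matrix.trace (Xᵀ * A * Y) = 0 := by
      simp [Matrix.trace]
    rw [h0, abs_zero]
    positivity
  have hkn : k ≤ n := hk.trans (min_le_right _ _)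
  have hB := Matrix.isHermitian_conjTranspose_mul_self A
  have hμ0 : ∀ i, 0 ≤ hB.eigenvalues i := Matrix.eigenvalues_conjTranspose_mul_self_nonneg A
  set μ : Fin n → ℝ := hB.eigenvalues with hμdef
  set U : Matrix (Fin n) (Fin n) ℝ := (hB.eigenvectorUnitary : Matrix (Fin n) (Fin n) ℝ) with hUdef
  have hsU : star U = Uᵀ := by
    rw [Matrix.star_eq_conjTranspose, Matrix.conjTranspose_eq_transpose_of_trivial]
  have hspec : Aᴴ * A = U * Matrix.diagonal μ * Uᵀ := by
    rw [← hsU]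
    convert hB.spectral_theorem using 2
    rw [Unitary.conjStarAlgAut_apply]
    rfl
  have hUUt : U * Uᵀ = 1 := by
    rw [← hsU]
    exact Matrix.mem_unitaryGroup_iff.mp hB.eigenvectorUnitary.2
  set M : Matrix (Fin n) (Fin k) ℝ := Uᵀ * Y with hMdef
  have hM : Mᵀ * M = 1 := by
    rw [hMdef, Matrix.transpose_mul, Matrix.transpose_transpose, Matrix.mul_assoc,
      ← Matrix.mul_assoc U, hUUt, Matrix.one_mul, hY]
  have htr2 : Matrix.trace (Yᵀ * (Aᴴ * A) * Y) = ∑ i, μ i * ∑ j, M i j ^ 2 := by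
    rw [hspec, ← aux_trace_diag μ M]
    congr 1
    rw [hMdef, Matrix.transpose_mul, Matrix.transpose_transpose]
    simp only [Matrix.mul_assoc]
  set c : Fin n → ℝ := fun i => ∑ j, M i j ^ 2 with hcdef
  have hthresh : ∑ i, μ i * c i
      ≤ ∑ i ∈ Finset.univ.filter (fun i : Fin n => (i : ℕ) < k), σ i ^ 2 := by
    have hre : ∑ i, μ i * c i = ∑ i, (σ i ^ 2) * c (e i) := by
      rw [← Equiv.sum_comp e (fun i => μ i * c i)]
      refine Finset.sum_congr rfl fun i _ => ?_
      congr 1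
      rw [hσe]
      simp only [Function.comp_apply, singularValues]
      rw [Real.sq_sqrt (hμ0 (e i))]
    rw [hre]
    exact aux_thresh hkn hk0 (fun i => σ i ^ 2) (fun i => c (e i))
      (fun i j hij => pow_le_pow_left₀ (hσ0 j) (hant hij) 2)
      (fun i => by positivity)
      (fun i => aux_row_sq_le_one M hM (e i))
      (by rw [Equiv.sum_comp e c]; exact aux_sum_rows_sq M hM)
  have hmain : |Matrix.trace (Xᵀ * A * Y)|
      ≤ Real.sqrt k * Real.sqrt (Matrix.trace (Yᵀ * (Aᴴ * A) * Y)) := by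
    have h := aux_cs X hX (A * Y)
    rw [← Matrix.mul_assoc] at h
    convert h using 3
    rw [Matrix.transpose_mul, Matrix.conjTranspose_eq_transpose_of_trivial]
    simp only [Matrix.mul_assoc]
  refine hmain.trans ?_
  apply mul_le_mul_of_nonneg_left _ (Real.sqrt_nonneg _)
  apply Real.sqrt_le_sqrt
  rw [htr2]
  exact hthresh
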